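/- arXiv:2604.00692 — 2 statements merged into one kernel-verified Lean document; each statement's English description precedes it below -/
import Mathlib

section
/- In the setting of the generator identity for 𝓛_ε V, assume additionally that there are constants κ₀, C_A, c₀, c₁, C_U, C_σ > 0 such that for all x, y, ξ ∈ ℝ^d: ⟨A(y)ξ, ξ⟩ ≥ κ₀·|ξ|²; |Σ_{i,j=1}^d x_i·x_j·∂_{y_j}(𝒜_h)_i(y)| ≤ C_A·|x|²; ⟨𝒜_h(y), ∇U(y)⟩ ≥ c₀·|y|² + c₁·U(y) − C_U; U(y) ≥ 0; and tr(σ(y)σ(y)ᵀ) ≤ C_σ. Then for every η ∈ (0, κ₀/C_A], setting c := min(κ₀, η·c₀, η·c₁) > 0 and C := η·C_U + 2·C_σ, one has for all ε ∈ (0,1) and all (x,y) ∈ ℝ^d × ℝ^d: 𝓛_ε V(x,y) ≤ −c·(|x|² + |y|² + U(y)) + C. -/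
noncomputable section

open Matrix

/-- The `i`-th standard basis vector of `ℝ^d`. -/
def esingle {d : ℕ} (i : Fin d) : EuclideanSpace ℝ (Fin d) :=
  EuclideanSpace.single i 1

/-- The generator of the kinetic (Smoluchowski–Kramers) system:
`𝓛_ε f(x,y) = ε^{−2}[tr(σ(y)σ(y)ᵀ ∇ₓ²f) − ⟨A(y)x, ∇ₓf⟩]
  + ε^{−1}[⟨x, ∇_y f⟩ − ⟨∇U(y), ∇ₓf⟩]`. -/
def LKin {d m : ℕ}
    (A : EuclideanSpace ℝ (Fin d) → Matrix (Fin d) (Fin d) ℝ)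
    (σ : EuclideanSpace ℝ (Fin d) → Matrix (Fin d) (Fin m) ℝ)
    (U : EuclideanSpace ℝ (Fin d) → ℝ) (ε : ℝ)
    (f : EuclideanSpace ℝ (Fin d) → EuclideanSpace ℝ (Fin d) → ℝ)
    (x y : EuclideanSpace ℝ (Fin d)) : ℝ :=
  (ε ^ 2)⁻¹ *
      ((∑ i, ∑ j, (σ y * (σ y)ᵀ) i j *
          iteratedFDeriv ℝ 2 (fun x' => f x' y) x ![esingle j, esingle i])
        - ∑ i, (∑ j, A y i j * x j) * fderiv ℝ (fun x' => f x' y) x (esingle i))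
    + ε⁻¹ *
      ((∑ i, x i * fderiv ℝ (fun y' => f x y') y (esingle i))
        - ∑ i, fderiv ℝ U y (esingle i) * fderiv ℝ (fun x' => f x' y) x (esingle i))

/-- The Lyapunov function
`V(x,y) = ε²(|x|² + 2U(y)) + ηε⟨x, 𝒜(y)⟩ + ηh(y) + 1`. -/
def Vfun {d : ℕ} (U h : EuclideanSpace ℝ (Fin d) → ℝ)
    (𝒜 : EuclideanSpace ℝ (Fin d) → EuclideanSpace ℝ (Fin d)) (ε η : ℝ)
    (x y : EuclideanSpace ℝ (Fin d)) : ℝ :=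
  ε ^ 2 * (‖x‖ ^ 2 + 2 * U y) + η * ε * (∑ i, x i * 𝒜 y i) + η * h y + 1

/-! Computing `𝓛_ε V` explicitly, every term with a negative power of `ε` cancels: the `ε⁻¹`-term
`η⟨x, ∇h⟩` coming from `∇_y V` is matched by `ε⁻² ⟨A x, ηε 𝒜_h⟩`, because `𝒜_h = A⁻ᵀ ∇h`. What
remains is `2 tr(σσᵀ) − 2⟨A x, x⟩ + η⟨x, D𝒜_h·x⟩ − η⟨𝒜_h, ∇U⟩`. Since `η C_A ≤ κ₀`, half of the
coercivity of `A` absorbs the third term, and the coercivity of `⟨𝒜_h, ∇U⟩` controls the last. -/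

open scoped RealInnerProductSpace

section Quadratic

variable {E : Type*} [NormedAddCommGroup E] [InnerProductSpace ℝ E]

theorem hasFDerivAt_quadratic (a c : ℝ) (b x : E) :
    HasFDerivAt (fun x : E => a * ‖x‖ ^ 2 + ⟪b, x⟫ + c)
      ((2 * a) • innerSL ℝ x + innerSL ℝ b) x := by
  refine ((((hasStrictFDerivAt_norm_sq x).hasFDerivAt.const_mul a).add
    (innerSL ℝ b).hasFDerivAt).add_const c).congr_fderiv ?_
  ext v; simp; ring

theorem fderiv_quadratic (a c : ℝ) (b : E) :
    fderiv ℝ (fun x : E => a * ‖x‖ ^ 2 + ⟪b, x⟫ + c)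
      = fun x => (2 * a) • innerSL ℝ x + innerSL ℝ b :=
  funext fun x => (hasFDerivAt_quadratic a c b x).fderiv

theorem iteratedFDeriv_two_quadratic (a c : ℝ) (b x u v : E) :
    iteratedFDeriv ℝ 2 (fun x : E => a * ‖x‖ ^ 2 + ⟪b, x⟫ + c) x ![u, v] = 2 * a * ⟪u, v⟫ := by
  have hD : HasFDerivAt (fun x => (2 * a) • innerSL ℝ x + innerSL ℝ b) ((2 * a) • innerSL ℝ) x :=
    ((innerSL ℝ).hasFDerivAt.const_smul (2 * a)).add_const _
  rw [iteratedFDeriv_two_apply, fderiv_quadratic, hD.fderiv]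
  rfl

end Quadratic

theorem EuclideanSpace.sum_mul_eq_inner {ι : Type*} [Fintype ι] (x v : EuclideanSpace ℝ ι) :
    ∑ i, x i * v i = ⟪v, x⟫ := by
  simp [PiLp.inner_apply]

theorem Matrix.mulVec_dotProduct_inv_transpose_mulVec {n R : Type*} [Fintype n] [DecidableEq n]
    [CommRing R] {A : Matrix n n R} (hA : IsUnit A) (x g : n → R) :
    (A *ᵥ x) ⬝ᵥ ((A⁻¹)ᵀ *ᵥ g) = x ⬝ᵥ g := by
  rw [dotProduct_mulVec, vecMul_transpose, mulVec_mulVec,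
    nonsing_inv_mul _ ((isUnit_iff_isUnit_det A).mp hA), one_mulVec]

theorem min_min_mul_add_add_le {a b c p q r : ℝ} (hp : 0 ≤ p) (hq : 0 ≤ q) (hr : 0 ≤ r) :
    min a (min b c) * (p + q + r) ≤ a * p + b * q + c * r := by
  have ha : min a (min b c) * p ≤ a * p := by gcongr; exact min_le_left _ _
  have hb : min a (min b c) * q ≤ b * q := by
    gcongr; exact (min_le_right _ _).trans (min_le_left _ _)
  have hc : min a (min b c) * r ≤ c * r := by
    gcongr; exact (min_le_right _ _).trans (min_le_right _ _)
  linarith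

section Lyapunov

variable {d : ℕ} {U h : EuclideanSpace ℝ (Fin d) → ℝ}
  {𝒜 : EuclideanSpace ℝ (Fin d) → EuclideanSpace ℝ (Fin d)} {ε η : ℝ}

theorem Vfun_fst_eq (y : EuclideanSpace ℝ (Fin d)) :
    (fun x => Vfun U h 𝒜 ε η x y)
      = fun x => ε ^ 2 * ‖x‖ ^ 2 + ⟪(η * ε) • 𝒜 y, x⟫ + (2 * ε ^ 2 * U y + η * h y + 1) := by
  ext x
  rw [Vfun, EuclideanSpace.sum_mul_eq_inner, real_inner_smul_left]
  ring

theorem fderiv_Vfun_fst_apply (x y : EuclideanSpace ℝ (Fin d)) (i : Fin d) :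
    fderiv ℝ (fun x => Vfun U h 𝒜 ε η x y) x (esingle i) = 2 * ε ^ 2 * x i + η * ε * 𝒜 y i := by
  rw [Vfun_fst_eq, fderiv_quadratic]
  simp [esingle, EuclideanSpace.inner_single_right]

theorem iteratedFDeriv_two_Vfun_fst (x y : EuclideanSpace ℝ (Fin d)) (i j : Fin d) :
    iteratedFDeriv ℝ 2 (fun x => Vfun U h 𝒜 ε η x y) x ![esingle j, esingle i]
      = 2 * ε ^ 2 * if i = j then 1 else 0 := by
  rw [Vfun_fst_eq, iteratedFDeriv_two_quadratic]
  simp [esingle, EuclideanSpace.inner_single_right, PiLp.single_apply]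

theorem hasFDerivAt_Vfun_snd {x y : EuclideanSpace ℝ (Fin d)} (hU : DifferentiableAt ℝ U y)
    (hh : DifferentiableAt ℝ h y) (h𝒜 : DifferentiableAt ℝ 𝒜 y) :
    HasFDerivAt (fun y => Vfun U h 𝒜 ε η x y)
      ((2 * ε ^ 2) • fderiv ℝ U y + (η * ε) • ∑ j, x j • fderiv ℝ (fun y => 𝒜 y j) y
        + η • fderiv ℝ h y) y := by
  have hV : (fun y => Vfun U h 𝒜 ε η x y) = fun y =>
      2 * ε ^ 2 * U y + η * ε * ∑ j, x j * 𝒜 y j + η * h y + (ε ^ 2 * ‖x‖ ^ 2 + 1) := by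
    ext y; rw [Vfun]; ring
  have hx𝒜 := HasFDerivAt.fun_sum (u := Finset.univ) fun j _ =>
    ((show DifferentiableAt ℝ (fun y => 𝒜 y j) y by fun_prop).hasFDerivAt.const_mul (x j))
  rw [hV]
  exact (((hU.hasFDerivAt.const_mul _).add (hx𝒜.const_mul _)).add
    (hh.hasFDerivAt.const_mul _)).add_const _

theorem fderiv_Vfun_snd_apply {x y : EuclideanSpace ℝ (Fin d)} (hU : DifferentiableAt ℝ U y)
    (hh : DifferentiableAt ℝ h y) (h𝒜 : DifferentiableAt ℝ 𝒜 y) (i : Fin d) :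
    fderiv ℝ (fun y => Vfun U h 𝒜 ε η x y) y (esingle i)
      = 2 * ε ^ 2 * fderiv ℝ U y (esingle i)
        + η * ε * ∑ j, x j * fderiv ℝ (fun y => 𝒜 y j) y (esingle i)
        + η * fderiv ℝ h y (esingle i) := by
  rw [(hasFDerivAt_Vfun_snd hU hh h𝒜).fderiv]
  simp

theorem LKin_Vfun_eq {m : ℕ} (A : EuclideanSpace ℝ (Fin d) → Matrix (Fin d) (Fin d) ℝ)
    (σ : EuclideanSpace ℝ (Fin d) → Matrix (Fin d) (Fin m) ℝ) {x y : EuclideanSpace ℝ (Fin d)}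
    (hA : IsUnit (A y)) (h𝒜A : ∀ i, 𝒜 y i = ∑ j, (A y)⁻¹ j i * fderiv ℝ h y (esingle j))
    (hU : DifferentiableAt ℝ U y) (hh : DifferentiableAt ℝ h y) (h𝒜 : DifferentiableAt ℝ 𝒜 y)
    (hε : ε ≠ 0) :
    LKin A σ U ε (Vfun U h 𝒜 ε η) x y
      = 2 * ∑ i, (σ y * (σ y)ᵀ) i i - 2 * ∑ i, (∑ j, A y i j * x j) * x i
        + η * ∑ i, ∑ j, x i * x j * fderiv ℝ (fun y => 𝒜 y i) y (esingle j)
        - η * ∑ i, 𝒜 y i * fderiv ℝ U y (esingle i) := by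
  have hA𝒜 : ∑ i, (∑ j, A y i j * x j) * 𝒜 y i = ∑ i, x i * fderiv ℝ h y (esingle i) := by
    have h𝒜y : ⇑(𝒜 y) = (A y)⁻¹ᵀ *ᵥ fun j => fderiv ℝ h y (esingle j) := funext h𝒜A
    exact h𝒜y ▸ (A y).mulVec_dotProduct_inv_transpose_mulVec hA x _
  have hQ : ∑ i, x i * ∑ j, x j * fderiv ℝ (fun y => 𝒜 y j) y (esingle i)
      = ∑ i, ∑ j, x i * x j * fderiv ℝ (fun y => 𝒜 y i) y (esingle j) := by
    simp only [Finset.mul_sum]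
    rw [Finset.sum_comm]
    exact Finset.sum_congr rfl fun _ _ => Finset.sum_congr rfl fun _ _ => by ring
  simp only [LKin, iteratedFDeriv_two_Vfun_fst, fderiv_Vfun_fst_apply,
    fderiv_Vfun_snd_apply hU hh h𝒜]
  simp only [mul_add, Finset.sum_add_distrib, mul_left_comm _ (2 * ε ^ 2), mul_left_comm _ (η * ε),
    mul_left_comm _ η, ← Finset.mul_sum, mul_ite, mul_one, mul_zero, Finset.sum_ite_eq,
    Finset.mem_univ, if_true, hA𝒜, hQ]
  simp only [← Finset.sum_mul, mul_comm (fderiv ℝ U y _)]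
  field_simp
  ring

end Lyapunov

theorem LKin_V_drift_bound_general {d m : ℕ}
    (A : EuclideanSpace ℝ (Fin d) → Matrix (Fin d) (Fin d) ℝ)
    (hAinv : ∀ y, IsUnit (A y))
    (σ : EuclideanSpace ℝ (Fin d) → Matrix (Fin d) (Fin m) ℝ)
    (U h : EuclideanSpace ℝ (Fin d) → ℝ)
    (hU : Differentiable ℝ U) (hh : Differentiable ℝ h)
    (𝒜 : EuclideanSpace ℝ (Fin d) → EuclideanSpace ℝ (Fin d))
    (h𝒜def : ∀ y i, 𝒜 y i = ∑ j, (A y)⁻¹ j i * fderiv ℝ h y (esingle j))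
    (h𝒜diff : Differentiable ℝ 𝒜)
    (κ₀ C_A c₀ c₁ C_U C_σ : ℝ)
    (hCA : 0 < C_A)
    (hcoerc : ∀ (y : EuclideanSpace ℝ (Fin d)) (ξ : EuclideanSpace ℝ (Fin d)),
      κ₀ * ‖ξ‖ ^ 2 ≤ ∑ i, (∑ j, A y i j * ξ j) * ξ i)
    (hquad : ∀ x y : EuclideanSpace ℝ (Fin d),
      |∑ i, ∑ j, x i * x j * fderiv ℝ (fun y' => 𝒜 y' i) y (esingle j)| ≤ C_A * ‖x‖ ^ 2)
    (hAU : ∀ y : EuclideanSpace ℝ (Fin d),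
      c₀ * ‖y‖ ^ 2 + c₁ * U y - C_U ≤ ∑ i, 𝒜 y i * fderiv ℝ U y (esingle i))
    (hU0 : ∀ y, 0 ≤ U y)
    (hσtr : ∀ y : EuclideanSpace ℝ (Fin d), ∑ i, (σ y * (σ y)ᵀ) i i ≤ C_σ) :
    ∀ η : ℝ, 0 < η → η ≤ κ₀ / C_A →
      ∀ ε : ℝ, 0 < ε → ε < 1 →
        ∀ x y : EuclideanSpace ℝ (Fin d),
          LKin A σ U ε (Vfun U h 𝒜 ε η) x y
            ≤ -(min κ₀ (min (η * c₀) (η * c₁))) * (‖x‖ ^ 2 + ‖y‖ ^ 2 + U y)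
              + (η * C_U + 2 * C_σ) := by
  intro η hη hηC_A ε hε _ x y
  rw [LKin_Vfun_eq A σ (hAinv y) (h𝒜def y) (hU y) (hh y) (h𝒜diff y) hε.ne']
  have hQ : η * ∑ i, ∑ j, x i * x j * fderiv ℝ (fun y' => 𝒜 y' i) y (esingle j)
      ≤ κ₀ * ‖x‖ ^ 2 :=
    calc _ ≤ η * (C_A * ‖x‖ ^ 2) := by gcongr; exact (le_abs_self _).trans (hquad x y)
      _ = η * C_A * ‖x‖ ^ 2 := by ring
      _ ≤ κ₀ * ‖x‖ ^ 2 := by gcongr; exact (le_div_iff₀ hCA).mp hηC_A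
  have hηAU := mul_le_mul_of_nonneg_left (hAU y) hη.le
  have hmin := min_min_mul_add_add_le (a := κ₀) (b := η * c₀) (c := η * c₁)
    (sq_nonneg ‖x‖) (sq_nonneg ‖y‖) (hU0 y)
  linarith [hcoerc y x, hσtr y]

/-- Uniform-in-`ε` Lyapunov drift estimate for the kinetic generator:
under coercivity of `A`, a bound on the derivative of `𝒜`, coercivity of
`⟨𝒜, ∇U⟩`, nonnegativity of `U` and a trace bound on `σσᵀ`,
`𝓛_ε V ≤ −c(|x|² + |y|² + U(y)) + C` with constants independent of `ε ∈ (0,1)`. -/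
theorem LKin_V_drift_bound {d m : ℕ}
    (A : EuclideanSpace ℝ (Fin d) → Matrix (Fin d) (Fin d) ℝ)
    (hAinv : ∀ y, IsUnit (A y))
    (σ : EuclideanSpace ℝ (Fin d) → Matrix (Fin d) (Fin m) ℝ)
    (U h : EuclideanSpace ℝ (Fin d) → ℝ)
    (hU : Differentiable ℝ U) (hh : Differentiable ℝ h)
    (𝒜 : EuclideanSpace ℝ (Fin d) → EuclideanSpace ℝ (Fin d))
    (h𝒜def : ∀ y i, 𝒜 y i = ∑ j, (A y)⁻¹ j i * fderiv ℝ h y (esingle j))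
    (h𝒜diff : Differentiable ℝ 𝒜)
    (κ₀ C_A c₀ c₁ C_U C_σ : ℝ)
    (hκ₀ : 0 < κ₀) (hCA : 0 < C_A) (hc₀ : 0 < c₀) (hc₁ : 0 < c₁)
    (hCU : 0 < C_U) (hCσ : 0 < C_σ)
    (hcoerc : ∀ (y : EuclideanSpace ℝ (Fin d)) (ξ : EuclideanSpace ℝ (Fin d)),
      κ₀ * ‖ξ‖ ^ 2 ≤ ∑ i, (∑ j, A y i j * ξ j) * ξ i)
    (hquad : ∀ x y : EuclideanSpace ℝ (Fin d),
      |∑ i, ∑ j, x i * x j * fderiv ℝ (fun y' => 𝒜 y' i) y (esingle j)| ≤ C_A * ‖x‖ ^ 2)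
    (hAU : ∀ y : EuclideanSpace ℝ (Fin d),
      c₀ * ‖y‖ ^ 2 + c₁ * U y - C_U ≤ ∑ i, 𝒜 y i * fderiv ℝ U y (esingle i))
    (hU0 : ∀ y, 0 ≤ U y)
    (hσtr : ∀ y : EuclideanSpace ℝ (Fin d), ∑ i, (σ y * (σ y)ᵀ) i i ≤ C_σ) :
    ∀ η : ℝ, 0 < η → η ≤ κ₀ / C_A →
      ∀ ε : ℝ, 0 < ε → ε < 1 →
        ∀ x y : EuclideanSpace ℝ (Fin d),
          LKin A σ U ε (Vfun U h 𝒜 ε η) x y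
            ≤ -(min κ₀ (min (η * c₀) (η * c₁))) * (‖x‖ ^ 2 + ‖y‖ ^ 2 + U y)
              + (η * C_U + 2 * C_σ) :=
  LKin_V_drift_bound_general A hAinv σ U h hU hh 𝒜 h𝒜def h𝒜diff κ₀ C_A c₀ c₁ C_U C_σ hCA hcoerc
    hquad hAU hU0 hσtr
end
end

section
/- Let σ : ℝ^d → ℝ^{d×m} and b : ℝ^d → ℝ^d be measurable, set a(x) := σ(x)σ(x)ᵀ, and for twice continuously differentiable ψ : ℝ^d → ℝ define 𝓛₀ψ(x) := tr(a(x)·∇²ψ(x)) + b(x)·∇ψ(x). Let Φ : ℝ^d → ℝ^d be twice continuously differentiable and b̃ : ℝ^d → ℝ^d be such that 𝓛₀Φ_i = −b̃_i for each component i = 1,…,d. Let μ be a probability measure on ℝ^d such that for all i, j ∈ {1,…,d} the functions b̃_i·Φ_j, ⟨σᵀ∇Φ_i, σᵀ∇Φ_j⟩ and 𝓛₀(Φ_i·Φ_j) are μ-integrable and ∫_{ℝ^d} 𝓛₀(Φ_i·Φ_j) dμ = 0. Then for all i, j ∈ {1,…,d}, (1/2)·∫_{ℝ^d} ( b̃_i(x)·Φ_j(x)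 + Φ_i(x)·b̃_j(x) ) μ(dx) = ∫_{ℝ^d} ⟨σ(x)ᵀ∇Φ_i(x), σ(x)ᵀ∇Φ_j(x)⟩ μ(dx). -/
/-!
The generator obeys the Leibniz rule `𝓛(fg) = f 𝓛g + g 𝓛f + 2Γ(f,g)`, where
`Γ(f,g) = ⟨σᵀ∇f, σᵀ∇g⟩` is the carré du champ. For `f = Φ_i`, `g = Φ_j` the cell problem turns
the first two terms into `-(b̃_i Φ_j + Φ_i b̃_j)`, and integrating against `μ`, which annihilates
`𝓛(Φ_i Φ_j)`, leaves `∫ (b̃_i Φ_j + Φ_i b̃_j) dμ = 2 ∫ Γ(Φ_i, Φ_j) dμ`.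
-/

noncomputable section

open MeasureTheory Matrix

/-- Partial derivative `∂_i ψ(x)`. -/
def pd {d : ℕ} (ψ : EuclideanSpace ℝ (Fin d) → ℝ)
    (x : EuclideanSpace ℝ (Fin d)) (i : Fin d) : ℝ :=
  fderiv ℝ ψ x (esingle i)

/-- Hessian entry `∂_i ∂_j ψ(x)` as the second iterated Fréchet derivative. -/
def hess2 {d : ℕ} (ψ : EuclideanSpace ℝ (Fin d) → ℝ)
    (x : EuclideanSpace ℝ (Fin d)) (i j : Fin d) : ℝ :=
  iteratedFDeriv ℝ 2 ψ x ![esingle i, esingle j]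

/-- The second-order operator
`𝓛₁ψ(x) := tr(σ(x)σ(x)ᵀ · ∇²ψ(x)) + b(x)·∇ψ(x)`. -/
def Lgen {d m : ℕ} (b : EuclideanSpace ℝ (Fin d) → EuclideanSpace ℝ (Fin d))
    (σ : EuclideanSpace ℝ (Fin d) → Matrix (Fin d) (Fin m) ℝ)
    (ψ : EuclideanSpace ℝ (Fin d) → ℝ) (x : EuclideanSpace ℝ (Fin d)) : ℝ :=
  (∑ i, ∑ j, (σ x * (σ x)ᵀ) i j * hess2 ψ x j i) + ∑ i, b x i * pd ψ x i

theorem Matrix.sum_mul_transpose_apply_mul {ι κ : Type*} [Fintype ι] [Fintype κ]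
    (S : Matrix ι κ ℝ) (p q : ι → ℝ) :
    ∑ i, ∑ j, (S * Sᵀ) i j * (p j * q i)
      = ∑ k, (∑ l, S l k * p l) * (∑ l, S l k * q l) := by
  simp only [mul_apply, transpose_apply, Finset.sum_mul, Finset.mul_sum]
  simp_rw [Finset.sum_comm (γ := ι) (s := Finset.univ) (t := (Finset.univ : Finset κ))]
  exact Finset.sum_congr rfl fun _ _ => Finset.sum_congr rfl fun _ _ =>
    Finset.sum_congr rfl fun _ _ => by ring

section

variable {d : ℕ}

theorem pd_mul {f g : EuclideanSpace ℝ (Fin d) → ℝ} {x : EuclideanSpace ℝ (Fin d)}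
    (hf : DifferentiableAt ℝ f x) (hg : DifferentiableAt ℝ g x) (i : Fin d) :
    pd (fun y => f y * g y) x i = f x * pd g x i + g x * pd f x i := by
  simp [pd, fderiv_fun_mul hf hg]

theorem hess2_eq_fderiv_fderiv (ψ : EuclideanSpace ℝ (Fin d) → ℝ)
    (x : EuclideanSpace ℝ (Fin d)) (i j : Fin d) :
    hess2 ψ x i j = fderiv ℝ (fderiv ℝ ψ) x (esingle i) (esingle j) := by
  simp [hess2, iteratedFDeriv_two_apply]

theorem hess2_mul {f g : EuclideanSpace ℝ (Fin d) → ℝ}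
    (hf : ContDiff ℝ 2 f) (hg : ContDiff ℝ 2 g) (x : EuclideanSpace ℝ (Fin d)) (i j : Fin d) :
    hess2 (fun y => f y * g y) x i j
      = f x * hess2 g x i j + g x * hess2 f x i j
        + pd f x i * pd g x j + pd g x i * pd f x j := by
  have hf1 : Differentiable ℝ f := hf.differentiable (by norm_num)
  have hg1 : Differentiable ℝ g := hg.differentiable (by norm_num)
  have hDf : Differentiable ℝ (fderiv ℝ f) :=
    (hf.fderiv_right (m := 1) (by norm_num)).differentiable one_ne_zero
  have hDg : Differentiable ℝ (fderiv ℝ g) :=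
    (hg.fderiv_right (m := 1) (by norm_num)).differentiable one_ne_zero
  have hleibniz :
      fderiv ℝ (fun y => f y * g y) = fun y => f y • fderiv ℝ g y + g y • fderiv ℝ f y :=
    funext fun y => fderiv_fun_mul (hf1 y) (hg1 y)
  have hfDg : DifferentiableAt ℝ (fun y => f y • fderiv ℝ g y) x := (hf1 x).smul (hDg x)
  have hgDf : DifferentiableAt ℝ (fun y => g y • fderiv ℝ f y) x := (hg1 x).smul (hDf x)
  rw [hess2_eq_fderiv_fderiv, hleibniz, fderiv_fun_add hfDg hgDf,
    fderiv_fun_smul (hf1 x) (hDg x), fderiv_fun_smul (hg1 x) (hDf x)]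
  simp only [hess2_eq_fderiv_fderiv, pd, _root_.add_apply, _root_.smul_apply,
    ContinuousLinearMap.smulRight_apply, smul_eq_mul]
  ring

def carreDuChamp {m : ℕ} (σ : EuclideanSpace ℝ (Fin d) → Matrix (Fin d) (Fin m) ℝ)
    (f g : EuclideanSpace ℝ (Fin d) → ℝ) (x : EuclideanSpace ℝ (Fin d)) : ℝ :=
  ∑ k, (∑ l, σ x l k * pd f x l) * (∑ l, σ x l k * pd g x l)

theorem Lgen_mul {m : ℕ} (b : EuclideanSpace ℝ (Fin d) → EuclideanSpace ℝ (Fin d))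
    (σ : EuclideanSpace ℝ (Fin d) → Matrix (Fin d) (Fin m) ℝ)
    {f g : EuclideanSpace ℝ (Fin d) → ℝ}
    (hf : ContDiff ℝ 2 f) (hg : ContDiff ℝ 2 g) (x : EuclideanSpace ℝ (Fin d)) :
    Lgen b σ (fun y => f y * g y) x
      = f x * Lgen b σ g x + g x * Lgen b σ f x + 2 * carreDuChamp σ f g x := by
  have hcross := sum_mul_transpose_apply_mul (σ x) (pd f x) (pd g x)
  have hcross' :
      ∑ i, ∑ j, (σ x * (σ x)ᵀ) i j * (pd g x j * pd f x i) = carreDuChamp σ f g x :=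
    (sum_mul_transpose_apply_mul (σ x) (pd g x) (pd f x)).trans
      (Finset.sum_congr rfl fun _ _ => mul_comm _ _)
  simp only [Lgen, hess2_mul hf hg,
    pd_mul (hf.differentiable (by norm_num) x) (hg.differentiable (by norm_num) x),
    mul_add, Finset.sum_add_distrib, mul_left_comm _ (f x), mul_left_comm _ (g x),
    ← Finset.mul_sum, hcross, hcross']
  unfold carreDuChamp
  ring

theorem integral_carreDuChamp_eq {m : ℕ}
    (b : EuclideanSpace ℝ (Fin d) → EuclideanSpace ℝ (Fin d))
    (σ : EuclideanSpace ℝ (Fin d) → Matrix (Fin d) (Fin m) ℝ)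
    {f g u v : EuclideanSpace ℝ (Fin d) → ℝ} (hf : ContDiff ℝ 2 f) (hg : ContDiff ℝ 2 g)
    (hLf : ∀ x, Lgen b σ f x = -u x) (hLg : ∀ x, Lgen b σ g x = -v x)
    {μ : Measure (EuclideanSpace ℝ (Fin d))}
    (hug : Integrable (fun x => u x * g x) μ) (hfv : Integrable (fun x => f x * v x) μ)
    (hΓ : Integrable (carreDuChamp σ f g) μ)
    (hzero : ∫ x, Lgen b σ (fun y => f y * g y) x ∂μ = 0) :
    (1 / 2 : ℝ) * ∫ x, (u x * g x + f x * v x) ∂μ = ∫ x, carreDuChamp σ f g x ∂μ := by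
  have hL : ∀ x, Lgen b σ (fun y => f y * g y) x
      = -(u x * g x + f x * v x) + 2 * carreDuChamp σ f g x := fun x => by
    rw [Lgen_mul b σ hf hg, hLf, hLg]
    ring
  simp_rw [hL] at hzero
  rw [integral_add (hug.fun_add hfv).fun_neg (hΓ.const_mul 2), integral_neg,
    integral_const_mul] at hzero
  linarith

end

theorem homogenization_cross_term_identity_general {d m : ℕ}
    (σ : EuclideanSpace ℝ (Fin d) → Matrix (Fin d) (Fin m) ℝ)
    (b : EuclideanSpace ℝ (Fin d) → EuclideanSpace ℝ (Fin d))
    (Φ btil : EuclideanSpace ℝ (Fin d) → EuclideanSpace ℝ (Fin d))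
    (hΦ : ContDiff ℝ 2 Φ)
    (hcell : ∀ (i : Fin d) (x : EuclideanSpace ℝ (Fin d)),
      Lgen b σ (fun y => Φ y i) x = -(btil x i))
    (μ : Measure (EuclideanSpace ℝ (Fin d)))
    (hint1 : ∀ i j : Fin d, Integrable (fun x => btil x i * Φ x j) μ)
    (hint2 : ∀ i j : Fin d, Integrable (fun x =>
      ∑ k, (∑ l, σ x l k * pd (fun y => Φ y i) x l)
        * (∑ l, σ x l k * pd (fun y => Φ y j) x l)) μ)
    (hzero : ∀ i j : Fin d,
      ∫ x, Lgen b σ (fun y => Φ y i * Φ y j) x ∂μ = 0) :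
    ∀ i j : Fin d,
      (1 / 2 : ℝ) * ∫ x, (btil x i * Φ x j + Φ x i * btil x j) ∂μ
        = ∫ x, ∑ k, (∑ l, σ x l k * pd (fun y => Φ y i) x l)
            * (∑ l, σ x l k * pd (fun y => Φ y j) x l) ∂μ := fun i j =>
  integral_carreDuChamp_eq b σ (contDiff_euclidean.mp hΦ i) (contDiff_euclidean.mp hΦ j)
    (hcell i) (hcell j) (hint1 i j) (by simpa only [mul_comm] using hint1 j i) (hint2 i j)
    (hzero i j)

/-- Cross-term identity in periodic homogenization: if `𝓛₀Φ_i = −b̃_i` and the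
invariant measure `μ` kills `𝓛₀(Φ_i Φ_j)`, then
`(1/2)∫ (b̃_i Φ_j + Φ_i b̃_j) dμ = ∫ ⟨σᵀ∇Φ_i, σᵀ∇Φ_j⟩ dμ`. -/
theorem homogenization_cross_term_identity {d m : ℕ}
    (σ : EuclideanSpace ℝ (Fin d) → Matrix (Fin d) (Fin m) ℝ)
    (b : EuclideanSpace ℝ (Fin d) → EuclideanSpace ℝ (Fin d))
    (hb : Measurable b) (hσ : ∀ i j, Measurable fun x => σ x i j)
    (Φ btil : EuclideanSpace ℝ (Fin d) → EuclideanSpace ℝ (Fin d))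
    (hΦ : ContDiff ℝ 2 Φ)
    (hcell : ∀ (i : Fin d) (x : EuclideanSpace ℝ (Fin d)),
      Lgen b σ (fun y => Φ y i) x = -(btil x i))
    (μ : Measure (EuclideanSpace ℝ (Fin d))) [IsProbabilityMeasure μ]
    (hint1 : ∀ i j : Fin d, Integrable (fun x => btil x i * Φ x j) μ)
    (hint2 : ∀ i j : Fin d, Integrable (fun x =>
      ∑ k, (∑ l, σ x l k * pd (fun y => Φ y i) x l)
        * (∑ l, σ x l k * pd (fun y => Φ y j) x l)) μ)
    (hint3 : ∀ i j : Fin d, Integrable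
      (fun x => Lgen b σ (fun y => Φ y i * Φ y j) x) μ)
    (hzero : ∀ i j : Fin d,
      ∫ x, Lgen b σ (fun y => Φ y i * Φ y j) x ∂μ = 0) :
    ∀ i j : Fin d,
      (1 / 2 : ℝ) * ∫ x, (btil x i * Φ x j + Φ x i * btil x j) ∂μ
        = ∫ x, ∑ k, (∑ l, σ x l k * pd (fun y => Φ y i) x l)
            * (∑ l, σ x l k * pd (fun y => Φ y j) x l) ∂μ :=
  homogenization_cross_term_identity_general σ b Φ btil hΦ hcell μ hint1 hint2 hzero
end
end
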